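/- (The tangent fields of the induced Chebyshev nets on the Gauss sphere and their lengths.) In the concordant Chebyshev setting, assume additionally h₁₂ ≠ 0 on U. Then on U: n_x − (h₁₁/h₁₂)·n_y = (κ/sin ω)·(cos ω · r_x − r_y) and −(h₂₂/h₁₂)·n_x + n_y = (κ/sin ω)·(cos ω · r_y − r_x); moreover each of these two vectors has squared Euclidean norm κ², i.e. after division by |κ| the images of the fields D_{ξ⁻} and D_{η⁺} under the Gauss map are unit tangent fields of Chebyshev nets on the sphere. -/

import Mathlib

open scoped Matrix

noncomputable def Dx {E : Type*} [NormedAddCommGroup E] [NormedSpace ℝ E]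
    (f : ℝ × ℝ → E) (p : ℝ × ℝ) : E := fderiv ℝ f p (1, 0)

noncomputable def Dy {E : Type*} [NormedAddCommGroup E] [NormedSpace ℝ E]
    (f : ℝ × ℝ → E) (p : ℝ × ℝ) : E := fderiv ℝ f p (0, 1)

/-- The unit normal `n = (r_x × r_y)/sin ω` of a Chebyshev parameterisation. -/
noncomputable def nvec (r : ℝ × ℝ → Fin 3 → ℝ) (ω : ℝ × ℝ → ℝ) (p : ℝ × ℝ) : Fin 3 → ℝ :=
  (Real.sin (ω p))⁻¹ • (crossProduct (Dx r p) (Dy r p))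

/-- `h₁₁ = (r_xx·n)/sin ω`. -/
noncomputable def h11 (r : ℝ × ℝ → Fin 3 → ℝ) (ω : ℝ × ℝ → ℝ) (p : ℝ × ℝ) : ℝ :=
  (Dx (Dx r) p ⬝ᵥ nvec r ω p) / Real.sin (ω p)

/-- `h₁₂ = (r_xy·n)/sin ω`. -/
noncomputable def h12 (r : ℝ × ℝ → Fin 3 → ℝ) (ω : ℝ × ℝ → ℝ) (p : ℝ × ℝ) : ℝ :=
  (Dy (Dx r) p ⬝ᵥ nvec r ω p) / Real.sin (ω p)

/-- `h₂₂ = (r_yy·n)/sin ω`. -/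
noncomputable def h22 (r : ℝ × ℝ → Fin 3 → ℝ) (ω : ℝ × ℝ → ℝ) (p : ℝ × ℝ) : ℝ :=
  (Dy (Dy r) p ⬝ᵥ nvec r ω p) / Real.sin (ω p)

/-- The associated surface `r⁺ = r + m/κ`. -/
noncomputable def rplus (r m : ℝ × ℝ → Fin 3 → ℝ) (κ : ℝ) (p : ℝ × ℝ) : Fin 3 → ℝ :=
  r p + κ⁻¹ • m p

/-- The associated surface `r⁻ = r − m/κ`. -/
noncomputable def rminus (r m : ℝ × ℝ → Fin 3 → ℝ) (κ : ℝ) (p : ℝ × ℝ) : Fin 3 → ℝ :=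
  r p - κ⁻¹ • m p

section Helpers

open Matrix

lemma ortho3 {u v w : Fin 3 → ℝ} (hD : (u ⨯₃ v) ⬝ᵥ (u ⨯₃ v) ≠ 0)
    (h1 : w ⬝ᵥ u = 0) (h2 : w ⬝ᵥ v = 0) (h3 : w ⬝ᵥ (u ⨯₃ v) = 0) : w = 0 := by
  funext j
  have key : ((u ⨯₃ v) ⬝ᵥ (u ⨯₃ v)) * w j =
      ((v ⬝ᵥ v) * (w ⬝ᵥ u) - (u ⬝ᵥ v) * (w ⬝ᵥ v)) * u j
      + ((u ⬝ᵥ u) * (w ⬝ᵥ v) - (u ⬝ᵥ v) * (w ⬝ᵥ u)) * v j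
      + (w ⬝ᵥ (u ⨯₃ v)) * (u ⨯₃ v) j := by
    fin_cases j <;>
      simp [cross_apply, dotProduct, Fin.sum_univ_three] <;> ring
  rw [h1, h2, h3] at key
  simp only [mul_zero, zero_mul, sub_zero, zero_sub, neg_zero, add_zero, zero_add] at key
  have := mul_eq_zero.mp key
  tauto

lemma cross_dot_cross' (u v : Fin 3 → ℝ) :
    (u ⨯₃ v) ⬝ᵥ (u ⨯₃ v) = (u ⬝ᵥ u) * (v ⬝ᵥ v) - (u ⬝ᵥ v) ^ 2 := by
  simp [cross_apply, dotProduct, Fin.sum_univ_three]; ring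

lemma hasFDerivAt_proj {f : ℝ × ℝ → Fin 3 → ℝ} {p : ℝ × ℝ}
    (hf : DifferentiableAt ℝ f p) (i : Fin 3) :
    HasFDerivAt (fun q => f q i)
      ((ContinuousLinearMap.proj i).comp (fderiv ℝ f p)) p := by
  exact
    ((ContinuousLinearMap.proj (R := ℝ) (φ := fun _ : Fin 3 => ℝ) i).hasFDerivAt).comp p
      hf.hasFDerivAt

lemma hasFDerivAt_dot {f g : ℝ × ℝ → Fin 3 → ℝ} {p : ℝ × ℝ}
    (hf : DifferentiableAt ℝ f p) (hg : DifferentiableAt ℝ g p) :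
    HasFDerivAt (fun q => f q ⬝ᵥ g q)
      ((f p 0 • (ContinuousLinearMap.proj 0).comp (fderiv ℝ g p)
        + g p 0 • (ContinuousLinearMap.proj 0).comp (fderiv ℝ f p))
       + ((f p 1 • (ContinuousLinearMap.proj 1).comp (fderiv ℝ g p)
        + g p 1 • (ContinuousLinearMap.proj 1).comp (fderiv ℝ f p))
       + (f p 2 • (ContinuousLinearMap.proj 2).comp (fderiv ℝ g p)
        + g p 2 • (ContinuousLinearMap.proj 2).comp (fderiv ℝ f p)))) p := by
  have h := ((hasFDerivAt_proj hf 0).mul (hasFDerivAt_proj hg 0)).add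
    (((hasFDerivAt_proj hf 1).mul (hasFDerivAt_proj hg 1)).add
      ((hasFDerivAt_proj hf 2).mul (hasFDerivAt_proj hg 2)))
  have heq : (fun q => f q ⬝ᵥ g q)
      = fun q => f q 0 * g q 0 + (f q 1 * g q 1 + f q 2 * g q 2) := by
    funext q; simp [dotProduct, Fin.sum_univ_three]; ring
  rw [heq]; exact h

lemma fderiv_dot {f g : ℝ × ℝ → Fin 3 → ℝ} {p : ℝ × ℝ}
    (hf : DifferentiableAt ℝ f p) (hg : DifferentiableAt ℝ g p) (d : ℝ × ℝ) :
    fderiv ℝ (fun q => f q ⬝ᵥ g q) p d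
      = fderiv ℝ f p d ⬝ᵥ g p + f p ⬝ᵥ fderiv ℝ g p d := by
  rw [(hasFDerivAt_dot hf hg).fderiv]
  simp [dotProduct, Fin.sum_univ_three]
  ring

lemma differentiableAt_cross {f g : ℝ × ℝ → Fin 3 → ℝ} {p : ℝ × ℝ}
    (hf : DifferentiableAt ℝ f p) (hg : DifferentiableAt ℝ g p) :
    DifferentiableAt ℝ (fun q => f q ⨯₃ g q) p := by
  have hfi : ∀ i : Fin 3, DifferentiableAt ℝ (fun q => f q i) p :=
    fun i => (hasFDerivAt_proj hf i).differentiableAt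
  have hgi : ∀ i : Fin 3, DifferentiableAt ℝ (fun q => g q i) p :=
    fun i => (hasFDerivAt_proj hg i).differentiableAt
  apply differentiableAt_pi.2
  intro i
  fin_cases i <;>
    simp only [cross_apply, Matrix.cons_val_zero, Matrix.cons_val_one, Matrix.head_cons,
      Matrix.cons_val_two, Matrix.tail_cons, Fin.isValue, Fin.zero_eta, Fin.mk_one] <;>
    first
      | exact ((hfi 1).mul (hgi 2)).sub ((hfi 2).mul (hgi 1))
      | exact ((hfi 2).mul (hgi 0)).sub ((hfi 0).mul (hgi 2))
      | exact ((hfi 0).mul (hgi 1)).sub ((hfi 1).mul (hgi 0))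

lemma contDiffOn_Dx {r : ℝ × ℝ → Fin 3 → ℝ} {U : Set (ℝ × ℝ)} (hU : IsOpen U)
    (hr : ContDiffOn ℝ (⊤ : ℕ∞) r U) : ContDiffOn ℝ (⊤ : ℕ∞) (Dx r) U :=
  (hr.fderiv_of_isOpen hU (by simp)).clm_apply contDiffOn_const

lemma contDiffOn_Dy {r : ℝ × ℝ → Fin 3 → ℝ} {U : Set (ℝ × ℝ)} (hU : IsOpen U)
    (hr : ContDiffOn ℝ (⊤ : ℕ∞) r U) : ContDiffOn ℝ (⊤ : ℕ∞) (Dy r) U :=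
  (hr.fderiv_of_isOpen hU (by simp)).clm_apply contDiffOn_const

lemma diffAt_of_contDiffOn {E : Type*} [NormedAddCommGroup E] [NormedSpace ℝ E]
    {f : ℝ × ℝ → E} {U : Set (ℝ × ℝ)} (hU : IsOpen U)
    (hf : ContDiffOn ℝ (⊤ : ℕ∞) f U) {p : ℝ × ℝ} (hp : p ∈ U) : DifferentiableAt ℝ f p :=
  (hf.contDiffAt (hU.mem_nhds hp)).differentiableAt (by simp)

lemma symm_second {r : ℝ × ℝ → Fin 3 → ℝ} {U : Set (ℝ × ℝ)} (hU : IsOpen U)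
    (hr : ContDiffOn ℝ (⊤ : ℕ∞) r U) {p : ℝ × ℝ} (hp : p ∈ U) :
    Dy (Dx r) p = Dx (Dy r) p := by
  have hfd : DifferentiableAt ℝ (fun q => fderiv ℝ r q) p :=
    diffAt_of_contDiffOn hU (hr.fderiv_of_isOpen hU (by simp)) hp
  have h1 : Dy (Dx r) p = fderiv ℝ (fderiv ℝ r) p (0, 1) (1, 0) := by
    show fderiv ℝ (fun q => fderiv ℝ r q (1, 0)) p (0, 1) = _
    rw [fderiv_clm_apply hfd (differentiableAt_const _)]
    simp
  have h2 : Dx (Dy r) p = fderiv ℝ (fderiv ℝ r) p (1, 0) (0, 1) := by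
    show fderiv ℝ (fun q => fderiv ℝ r q (0, 1)) p (1, 0) = _
    rw [fderiv_clm_apply hfd (differentiableAt_const _)]
    simp
  have hs := (hr.contDiffAt (hU.mem_nhds hp)).isSymmSndFDerivAt (by norm_num; show ((2 : ℕ∞) : WithTop ℕ∞) ≤ ((⊤ : ℕ∞) : WithTop ℕ∞); exact WithTop.coe_le_coe.2 le_top)
  rw [h1, h2, hs (0, 1) (1, 0)]

/-- fderiv of a function constant on an open set is zero there. -/
lemma fderiv_const_on {F : ℝ × ℝ → ℝ} {U : Set (ℝ × ℝ)} (hU : IsOpen U) {p : ℝ × ℝ}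
    (hp : p ∈ U) {c : ℝ} (h : ∀ q ∈ U, F q = c) (d : ℝ × ℝ) :
    fderiv ℝ F p d = 0 := by
  have heq : F =ᶠ[nhds p] fun _ => c :=
    Filter.eventuallyEq_of_mem (hU.mem_nhds hp) h
  rw [heq.fderiv_eq, fderiv_fun_const]
  simp

end Helpers

/-- **Tangent fields of the induced Chebyshev nets on the Gauss sphere and their
lengths.** With `h₁₂ ≠ 0` on `U`, the Gauss-map images of the asymptotic fields
`D_{ξ⁻}` and `D_{η⁺}` are `(κ/sin ω)(cos ω·r_x − r_y)` and `(κ/sin ω)(cos ω·r_y − r_x)`,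
each of squared norm `κ²`. -/
theorem gauss_sphere_chebyshev_fields
    (U : Set (ℝ × ℝ)) (hU : IsOpen U) (hUconn : IsConnected U)
    (r : ℝ × ℝ → Fin 3 → ℝ) (hr : ContDiffOn ℝ (⊤ : ℕ∞) r U)
    (ω : ℝ × ℝ → ℝ) (hω : ContDiffOn ℝ (⊤ : ℕ∞) ω U)
    (hω0 : ∀ p ∈ U, 0 < ω p) (hωπ : ∀ p ∈ U, ω p < Real.pi)
    (hxx : ∀ p ∈ U, Dx r p ⬝ᵥ Dx r p = 1)
    (hyy : ∀ p ∈ U, Dy r p ⬝ᵥ Dy r p = 1)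
    (hxy : ∀ p ∈ U, Dx r p ⬝ᵥ Dy r p = Real.cos (ω p))
    (κ : ℝ) (hκ : κ ≠ 0)
    (hconc : ∀ p ∈ U,
      h11 r ω p * h22 r ω p - (h12 r ω p) ^ 2 + κ * h12 r ω p = 0)
    (hh12 : ∀ p ∈ U, h12 r ω p ≠ 0) :
    ∀ p ∈ U,
      (Dx (nvec r ω) p - (h11 r ω p / h12 r ω p) • Dy (nvec r ω) p
        = (κ / Real.sin (ω p)) • (Real.cos (ω p) • Dx r p - Dy r p))
      ∧ (-(h22 r ω p / h12 r ω p) • Dx (nvec r ω) p + Dy (nvec r ω) p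
        = (κ / Real.sin (ω p)) • (Real.cos (ω p) • Dy r p - Dx r p))
      ∧ ((Dx (nvec r ω) p - (h11 r ω p / h12 r ω p) • Dy (nvec r ω) p)
          ⬝ᵥ (Dx (nvec r ω) p - (h11 r ω p / h12 r ω p) • Dy (nvec r ω) p) = κ ^ 2)
      ∧ ((-(h22 r ω p / h12 r ω p) • Dx (nvec r ω) p + Dy (nvec r ω) p)
          ⬝ᵥ (-(h22 r ω p / h12 r ω p) • Dx (nvec r ω) p + Dy (nvec r ω) p) = κ ^ 2) := by
  intro p hp
  have hsin : ∀ q ∈ U, 0 < Real.sin (ω q) := fun q hq =>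
    Real.sin_pos_of_pos_of_lt_pi (hω0 q hq) (hωπ q hq)
  have hs0 : Real.sin (ω p) ≠ 0 := ne_of_gt (hsin p hp)
  -- differentiability infrastructure
  have hDxC : ContDiffOn ℝ (⊤ : ℕ∞) (Dx r) U := contDiffOn_Dx hU hr
  have hDyC : ContDiffOn ℝ (⊤ : ℕ∞) (Dy r) U := contDiffOn_Dy hU hr
  have hDxd : ∀ q ∈ U, DifferentiableAt ℝ (Dx r) q := fun q hq =>
    diffAt_of_contDiffOn hU hDxC hq
  have hDyd : ∀ q ∈ U, DifferentiableAt ℝ (Dy r) q := fun q hq =>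
    diffAt_of_contDiffOn hU hDyC hq
  have hnd : ∀ q ∈ U, DifferentiableAt ℝ (nvec r ω) q := by
    intro q hq
    have hωd : DifferentiableAt ℝ ω q := diffAt_of_contDiffOn hU hω hq
    have hsind : DifferentiableAt ℝ (fun z => Real.sin (ω z)) q := hωd.sin
    have hinv : DifferentiableAt ℝ (fun z => (Real.sin (ω z))⁻¹) q :=
      hsind.inv (ne_of_gt (hsin q hq))
    exact hinv.smul (differentiableAt_cross (hDxd q hq) (hDyd q hq))
  -- pointwise identities on U
  have idxn : ∀ q ∈ U, Dx r q ⬝ᵥ nvec r ω q = 0 := by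
    intro q hq
    simp [nvec, dotProduct_smul]
  have idyn : ∀ q ∈ U, Dy r q ⬝ᵥ nvec r ω q = 0 := by
    intro q hq
    simp [nvec, dotProduct_smul]
  have idnn : ∀ q ∈ U, nvec r ω q ⬝ᵥ nvec r ω q = 1 := by
    intro q hq
    have hmm : (Dx r q ⨯₃ Dy r q) ⬝ᵥ (Dx r q ⨯₃ Dy r q) = (Real.sin (ω q)) ^ 2 := by
      rw [cross_dot_cross', hxx q hq, hyy q hq, hxy q hq, Real.sin_sq]; ring
    have hsq : Real.sin (ω q) ≠ 0 := ne_of_gt (hsin q hq)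
    simp only [nvec, smul_dotProduct, dotProduct_smul, smul_eq_mul, hmm]
    field_simp
  -- derivative equations in raw form
  have NNx : nvec r ω p ⬝ᵥ Dx (nvec r ω) p = 0 := by
    have h0 : fderiv ℝ (fun q => nvec r ω q ⬝ᵥ nvec r ω q) p (1, 0) = 0 :=
      fderiv_const_on hU hp idnn (1, 0)
    rw [fderiv_dot (hnd p hp) (hnd p hp)] at h0
    rw [dotProduct_comm (fderiv ℝ (nvec r ω) p (1, 0))] at h0
    simp only [Dx]
    linarith [h0]
  have NNy : nvec r ω p ⬝ᵥ Dy (nvec r ω) p = 0 := by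
    have h0 : fderiv ℝ (fun q => nvec r ω q ⬝ᵥ nvec r ω q) p (0, 1) = 0 :=
      fderiv_const_on hU hp idnn (0, 1)
    rw [fderiv_dot (hnd p hp) (hnd p hp)] at h0
    rw [dotProduct_comm (fderiv ℝ (nvec r ω) p (0, 1))] at h0
    simp only [Dy]
    linarith [h0]
  have uNx : Dx r p ⬝ᵥ Dx (nvec r ω) p = -(h11 r ω p * Real.sin (ω p)) := by
    have h0 : fderiv ℝ (fun q => Dx r q ⬝ᵥ nvec r ω q) p (1, 0) = 0 :=
      fderiv_const_on hU hp idxn (1, 0)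
    rw [fderiv_dot (hDxd p hp) (hnd p hp)] at h0
    have hh : Dx (Dx r) p ⬝ᵥ nvec r ω p = h11 r ω p * Real.sin (ω p) := by
      rw [h11]; field_simp
    simp only [Dx] at hh h0 ⊢
    linarith [h0, hh]
  have uNy : Dx r p ⬝ᵥ Dy (nvec r ω) p = -(h12 r ω p * Real.sin (ω p)) := by
    have h0 : fderiv ℝ (fun q => Dx r q ⬝ᵥ nvec r ω q) p (0, 1) = 0 :=
      fderiv_const_on hU hp idxn (0, 1)
    rw [fderiv_dot (hDxd p hp) (hnd p hp)] at h0
    have hh : Dy (Dx r) p ⬝ᵥ nvec r ω p = h12 r ω p * Real.sin (ω p) := by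
      rw [h12]; field_simp
    simp only [Dx, Dy] at hh h0 ⊢
    linarith [h0, hh]
  have vNx : Dy r p ⬝ᵥ Dx (nvec r ω) p = -(h12 r ω p * Real.sin (ω p)) := by
    have h0 : fderiv ℝ (fun q => Dy r q ⬝ᵥ nvec r ω q) p (1, 0) = 0 :=
      fderiv_const_on hU hp idyn (1, 0)
    rw [fderiv_dot (hDyd p hp) (hnd p hp)] at h0
    have hh : Dy (Dx r) p ⬝ᵥ nvec r ω p = h12 r ω p * Real.sin (ω p) := by
      rw [h12]; field_simp
    have hsym : Dx (Dy r) p = Dy (Dx r) p := (symm_second hU hr hp).symm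
    rw [← hsym] at hh
    simp only [Dx, Dy] at hh h0 ⊢
    linarith [h0, hh]
  have vNy : Dy r p ⬝ᵥ Dy (nvec r ω) p = -(h22 r ω p * Real.sin (ω p)) := by
    have h0 : fderiv ℝ (fun q => Dy r q ⬝ᵥ nvec r ω q) p (0, 1) = 0 :=
      fderiv_const_on hU hp idyn (0, 1)
    rw [fderiv_dot (hDyd p hp) (hnd p hp)] at h0
    have hh : Dy (Dy r) p ⬝ᵥ nvec r ω p = h22 r ω p * Real.sin (ω p) := by
      rw [h22]; field_simp
    simp only [Dy] at hh h0 ⊢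
    linarith [h0, hh]
  -- convenient orientations
  have Nxu : Dx (nvec r ω) p ⬝ᵥ Dx r p = -(h11 r ω p * Real.sin (ω p)) := by
    rw [dotProduct_comm]; exact uNx
  have Nyu : Dy (nvec r ω) p ⬝ᵥ Dx r p = -(h12 r ω p * Real.sin (ω p)) := by
    rw [dotProduct_comm]; exact uNy
  have Nxv : Dx (nvec r ω) p ⬝ᵥ Dy r p = -(h12 r ω p * Real.sin (ω p)) := by
    rw [dotProduct_comm]; exact vNx
  have Nyv : Dy (nvec r ω) p ⬝ᵥ Dy r p = -(h22 r ω p * Real.sin (ω p)) := by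
    rw [dotProduct_comm]; exact vNy
  have hmsN : Dx r p ⨯₃ Dy r p = Real.sin (ω p) • nvec r ω p := by
    rw [nvec, smul_smul, mul_inv_cancel₀ hs0, one_smul]
  have Nxm : Dx (nvec r ω) p ⬝ᵥ (Dx r p ⨯₃ Dy r p) = 0 := by
    rw [hmsN, dotProduct_smul, dotProduct_comm, NNx]; simp
  have Nym : Dy (nvec r ω) p ⬝ᵥ (Dx r p ⨯₃ Dy r p) = 0 := by
    rw [hmsN, dotProduct_smul, dotProduct_comm, NNy]; simp
  have uu : Dx r p ⬝ᵥ Dx r p = 1 := hxx p hp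
  have vv : Dy r p ⬝ᵥ Dy r p = 1 := hyy p hp
  have uv : Dx r p ⬝ᵥ Dy r p = Real.cos (ω p) := hxy p hp
  have vu : Dy r p ⬝ᵥ Dx r p = Real.cos (ω p) := by
    rw [dotProduct_comm]; exact uv
  have um : Dx r p ⬝ᵥ (Dx r p ⨯₃ Dy r p) = 0 := dot_self_cross _ _
  have vm : Dy r p ⬝ᵥ (Dx r p ⨯₃ Dy r p) = 0 := dot_cross_self _ _
  have hmm0 : (Dx r p ⨯₃ Dy r p) ⬝ᵥ (Dx r p ⨯₃ Dy r p) ≠ 0 := by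
    rw [cross_dot_cross', uu, vv, uv]
    have he : 1 * 1 - Real.cos (ω p) ^ 2 = Real.sin (ω p) ^ 2 := by
      rw [Real.sin_sq]; ring
    rw [he]
    exact pow_ne_zero 2 hs0
  have hcs : Real.cos (ω p) ^ 2 = 1 - Real.sin (ω p) ^ 2 := by
    rw [Real.sin_sq]; ring
  have hc2 : Real.cos (ω p) * Real.cos (ω p) - 1 = -(Real.sin (ω p) ^ 2) := by
    linear_combination hcs
  have h12p := hh12 p hp
  have hconcp := hconc p hp
  -- first field equation
  have key1 : Dx (nvec r ω) p - (h11 r ω p / h12 r ω p) • Dy (nvec r ω) p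
      = (κ / Real.sin (ω p)) • (Real.cos (ω p) • Dx r p - Dy r p) := by
    rw [← sub_eq_zero]
    apply ortho3 (u := Dx r p) (v := Dy r p) hmm0
    · simp only [sub_dotProduct, smul_dotProduct, smul_eq_mul,
        Nxu, Nyu, uu, vu]
      field_simp
      ring
    · simp only [sub_dotProduct, smul_dotProduct, smul_eq_mul,
        Nxv, Nyv, uv, vv]
      rw [hc2]
      field_simp
      linear_combination Real.sin (ω p) * hconcp
    · simp only [sub_dotProduct, smul_dotProduct, smul_eq_mul,
        Nxm, Nym, um, vm]
      ring
  -- second field equation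
  have key2 : -(h22 r ω p / h12 r ω p) • Dx (nvec r ω) p + Dy (nvec r ω) p
      = (κ / Real.sin (ω p)) • (Real.cos (ω p) • Dy r p - Dx r p) := by
    rw [← sub_eq_zero]
    apply ortho3 (u := Dx r p) (v := Dy r p) hmm0
    · simp only [sub_dotProduct, add_dotProduct, smul_dotProduct,
        smul_eq_mul, Nxu, Nyu, uu, vu]
      rw [hc2]
      field_simp
      linear_combination Real.sin (ω p) * hconcp
    · simp only [sub_dotProduct, add_dotProduct, smul_dotProduct,
        smul_eq_mul, Nxv, Nyv, uv, vv]
      field_simp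
      ring
    · simp only [sub_dotProduct, add_dotProduct, smul_dotProduct,
        smul_eq_mul, Nxm, Nym, um, vm]
      ring
  refine ⟨key1, key2, ?_, ?_⟩
  · rw [key1]
    simp only [smul_dotProduct, dotProduct_smul, sub_dotProduct,
      dotProduct_sub, smul_eq_mul, uu, vv, uv, vu]
    field_simp
    linear_combination (-1 : ℝ) * hcs
  · rw [key2]
    simp only [smul_dotProduct, dotProduct_smul, sub_dotProduct,
      dotProduct_sub, smul_eq_mul, uu, vv, uv, vu]
    field_simp
    linear_combination (-1 : ℝ) * hcs
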